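/- arXiv:2010.03141 — 4 statements merged into one kernel-verified Lean document; each statement's English description precedes it below -/
import Mathlib

section
/- Let X follow the negative multinomial distribution NM(r, p) on (ℕ₀)^m with r ≥ 1. Then for every i, the estimator X_i/(r + X_· − 1) (interpreted as 0 when X_i = 0, even if the denominator vanishes) is an unbiased estimator of p_i: E[ X_i / (r + X_· − 1) ] = p_i, where X_· = X_1 + ... + X_m. -/
/-!
Shifting the `i`-th coordinate, `x ↦ x + eᵢ`, turns the summand `xᵢ / (r + |x| - 1) · P(x)` of the
estimator's expectation into `pᵢ · P(x - eᵢ)`, because `Γ(r + |x| + 1) = (r + |x|) Γ(r + |x|)` and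
`(xᵢ + 1)! = (xᵢ + 1) xᵢ!`; terms with `xᵢ = 0` vanish. So the expectation is `pᵢ` times the total
mass of the negative multinomial distribution. That mass is `1`: grouping the `x` by `|x| = n`,
the multinomial theorem collapses each group to `Γ(r + n) / (Γ(r) n!) · sⁿ` with `s = Σ pⱼ`, and
the negative binomial series sums these to `(1 - s)⁻ʳ`.
-/

open Finset Function

theorem hasSum_of_hasSum_fiberwise_of_nonneg {β γ : Type*} {f : β → ℝ} (hf : 0 ≤ f) (g : β → γ)
    {s : γ → ℝ} {a : ℝ} (hfib : ∀ c, HasSum (fun b : {b // g b = c} => f b) (s c))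
    (hs : HasSum s a) : HasSum f a := by
  rw [← (Equiv.sigmaFiberEquiv g).hasSum_iff]
  refine hs.sigma_of_hasSum hfib ((summable_sigma_of_nonneg fun _ => hf _).2 ⟨?_, ?_⟩)
  · exact fun c => (hfib c).summable
  · exact hs.summable.congr fun c => (hfib c).tsum_eq.symm

theorem Real.Gamma_add_nat_eq_mul_ascPochhammer {a : ℝ} (ha : ∀ k : ℕ, a ≠ -k) (n : ℕ) :
    Real.Gamma (a + n) = Real.Gamma a * (ascPochhammer ℝ n).eval a := by
  induction n with
  | zero => simp
  | succ n ih =>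
    have hn : a + n ≠ 0 := fun h => ha n (eq_neg_of_add_eq_zero_left h)
    rw [Nat.cast_succ, ← add_assoc, Real.Gamma_add_one hn, ih, ascPochhammer_succ_eval]
    ring

theorem Ring.choose_add_nat_sub_one_mul_factorial {K : Type*} [Field K] [CharZero K]
    (a : K) (n : ℕ) :
    Ring.choose (a + n - 1) n * n.factorial = (ascPochhammer K n).eval a := by
  rw [Ring.choose_eq_smul, Polynomial.descPochhammer_smeval_eq_ascPochhammer,
    Polynomial.ascPochhammer_smeval_eq_eval, smul_eq_mul,
    show a + n - 1 - n + 1 = a by ring, mul_comm,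
    mul_inv_cancel_left₀ (by exact_mod_cast n.factorial_ne_zero)]

theorem Real.hasSum_Gamma_div_mul_pow {a : ℝ} (ha : ∀ k : ℕ, a ≠ -k) {x : ℝ} (hx : |x| < 1) :
    HasSum (fun n : ℕ => Real.Gamma (a + n) / (Real.Gamma a * n.factorial) * x ^ n)
      ((1 - x) ^ (-a)) := by
  have hseries := (Real.one_div_one_sub_rpow_hasFPowerSeriesOnBall_zero a).hasSum
    (y := x) (by simpa [enorm_eq_nnnorm, ← NNReal.coe_lt_coe] using hx)
  have hcoeff : ∀ n : ℕ,
      Real.Gamma (a + n) / (Real.Gamma a * n.factorial) = Ring.choose (a + n - 1) n := by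
    intro n
    rw [Real.Gamma_add_nat_eq_mul_ascPochhammer ha, ← Ring.choose_add_nat_sub_one_mul_factorial]
    field_simp [Real.Gamma_ne_zero ha]
  simp only [FormalMultilinearSeries.ofScalars_apply_eq, smul_eq_mul, zero_add] at hseries
  rw [Real.rpow_neg (by linarith [abs_lt.1 hx]), inv_eq_one_div]
  simpa only [hcoeff] using hseries

section

variable {ι : Type*} [Fintype ι]

@[to_additive]
theorem Fintype.prod_apply_update_of_eq_mul {α M : Type*} [DecidableEq ι] [CommMonoid M]
    (F : ι → α → M) (x : ι → α) (i : ι) {v : α} {c : M} (h : F i v = c * F i (x i)) :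
    ∏ j, F j (update x i v j) = c * ∏ j, F j (x j) := by
  simp only [apply_update F x i v, prod_update_of_mem (mem_univ i), h, mul_assoc,
    Fintype.prod_eq_mul_prod_compl i fun j => F j (x j), compl_eq_univ_sdiff]

theorem hasSum_subtype_sum_eq_sum_piAntidiag [DecidableEq ι] (f : (ι → ℕ) → ℝ) (n : ℕ) :
    HasSum (fun x : {x : ι → ℕ // ∑ j, x j = n} => f x) (∑ x ∈ piAntidiag univ n, f x) := by
  have hmem (x : ι → ℕ) :
      ∑ j, x j = n ↔ x ∈ ((piAntidiag univ n : Finset (ι → ℕ)) : Set (ι → ℕ)) := by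
    simp [mem_piAntidiag]
  exact ((Equiv.subtypeEquivRight hmem).hasSum_iff (f := f ∘ Subtype.val)).2
    (Finset.hasSum (piAntidiag univ n) f)

theorem sum_piAntidiag_Gamma_div_mul_prod_pow [DecidableEq ι] (a : ℝ) (p : ι → ℝ) (n : ℕ) :
    ∑ x ∈ piAntidiag univ n,
        Real.Gamma (a + ∑ j, (x j : ℝ)) / (Real.Gamma a * ∏ j, ((x j).factorial : ℝ)) *
          ∏ j, p j ^ x j =
      Real.Gamma (a + n) / (Real.Gamma a * n.factorial) * (∑ j, p j) ^ n := by
  rw [sum_pow_eq_sum_piAntidiag, mul_sum]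
  refine sum_congr rfl fun x hx => ?_
  have hsum : ∑ j, x j = n := (mem_piAntidiag.1 hx).1
  have hmult : (∏ j, ((x j).factorial : ℝ)) * Nat.multinomial univ x = n.factorial := by
    exact_mod_cast hsum ▸ Nat.multinomial_spec univ x
  have hmult_pos : (0 : ℝ) < Nat.multinomial univ x := by exact_mod_cast Nat.multinomial_pos _ _
  rw [← Nat.cast_sum, hsum, ← hmult]
  field_simp

theorem hasSum_Gamma_div_mul_prod_pow {a : ℝ} (ha : 0 < a) {p : ι → ℝ} (hp : 0 ≤ p)
    (hps : ∑ j, p j < 1) :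
    HasSum (fun x : ι → ℕ =>
        Real.Gamma (a + ∑ j, (x j : ℝ)) / (Real.Gamma a * ∏ j, ((x j).factorial : ℝ)) *
          ∏ j, p j ^ x j)
      ((1 - ∑ j, p j) ^ (-a)) := by
  classical
  have hnonneg : 0 ≤ ∑ j, p j := sum_nonneg fun j _ => hp j
  set w : (ι → ℕ) → ℝ := fun x =>
    Real.Gamma (a + ∑ j, (x j : ℝ)) / (Real.Gamma a * ∏ j, ((x j).factorial : ℝ)) *
      ∏ j, p j ^ x j
  refine hasSum_of_hasSum_fiberwise_of_nonneg (f := w) (g := fun x => ∑ j, x j) (fun x => ?_)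
    (fun n => hasSum_subtype_sum_eq_sum_piAntidiag w n) ?_
  · have hΓx := Real.Gamma_pos_of_pos (by positivity : 0 < a + ∑ j, (x j : ℝ))
    have hΓa := Real.Gamma_pos_of_pos ha
    exact mul_nonneg (by positivity) (prod_nonneg fun j _ => pow_nonneg (hp j) _)
  · simp only [w, sum_piAntidiag_Gamma_div_mul_prod_pow]
    exact Real.hasSum_Gamma_div_mul_pow (fun k h => by linarith [h, (k.cast_nonneg : (0:ℝ) ≤ k)])
      (abs_lt.2 ⟨by linarith, hps⟩)

noncomputable def negMultinomialPMF (r : ℝ) (p : ι → ℝ) (x : ι → ℕ) : ℝ :=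
  Real.Gamma (r + ∑ j, (x j : ℝ)) / (Real.Gamma r * ∏ j, ((x j).factorial : ℝ)) *
    (1 - ∑ j, p j) ^ r * ∏ j, p j ^ x j

theorem hasSum_negMultinomialPMF {r : ℝ} (hr : 0 < r) {p : ι → ℝ} (hp : 0 ≤ p)
    (hps : ∑ j, p j < 1) : HasSum (negMultinomialPMF r p) 1 := by
  have hpos : 0 < 1 - ∑ j, p j := by linarith
  have h := (hasSum_Gamma_div_mul_prod_pow hr hp hps).mul_left ((1 - ∑ j, p j) ^ r)
  rw [← Real.rpow_add hpos, add_neg_cancel, Real.rpow_zero] at h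
  refine h.congr_fun fun x => ?_
  unfold negMultinomialPMF
  ring

theorem sum_cast_update_succ [DecidableEq ι] (x : ι → ℕ) (i : ι) :
    ∑ j, (update x i (x i + 1) j : ℝ) = 1 + ∑ j, (x j : ℝ) :=
  Fintype.sum_apply_update_of_eq_add (fun _ (n : ℕ) => (n : ℝ)) x i (by push_cast; ring)

theorem negMultinomialPMF_update_succ [DecidableEq ι] (r : ℝ) (p : ι → ℝ) (x : ι → ℕ) (i : ι)
    (hx : r + ∑ j, (x j : ℝ) ≠ 0) :
    ((x i : ℝ) + 1) * negMultinomialPMF r p (update x i (x i + 1)) =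
      (r + ∑ j, (x j : ℝ)) * p i * negMultinomialPMF r p x := by
  have hsum := sum_cast_update_succ x i
  have hfact := Fintype.prod_apply_update_of_eq_mul (fun _ (n : ℕ) => (n.factorial : ℝ)) x i
    (v := x i + 1) (c := (x i : ℝ) + 1) (by push_cast [Nat.factorial_succ]; ring)
  have hpow := Fintype.prod_apply_update_of_eq_mul (fun j (n : ℕ) => p j ^ n) x i
    (v := x i + 1) (c := p i) (pow_succ' _ _)
  have hGamma : Real.Gamma (r + (1 + ∑ j, (x j : ℝ))) =
      (r + ∑ j, (x j : ℝ)) * Real.Gamma (r + ∑ j, (x j : ℝ)) := by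
    rw [← Real.Gamma_add_one hx]
    ring_nf
  unfold negMultinomialPMF
  rw [hsum, hfact, hpow, hGamma]
  field_simp

theorem hasSum_div_mul_negMultinomialPMF [DecidableEq ι] {r : ℝ} (hr : 0 < r) {p : ι → ℝ}
    (hp : 0 ≤ p) (hps : ∑ j, p j < 1) (i : ι) :
    HasSum (fun x : ι → ℕ => (x i : ℝ) / (r + ∑ j, (x j : ℝ) - 1) * negMultinomialPMF r p x)
      (p i) := by
  set succAt : (ι → ℕ) → (ι → ℕ) := fun y => update y i (y i + 1)
  have hinj : Injective succAt := by
    intro y z h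
    ext j
    by_cases hj : j = i
    · subst hj
      simpa [succAt] using congrFun h j
    · simpa [succAt, hj] using congrFun h j
  have hrange (x : ι → ℕ) (hx : x ∉ Set.range succAt) : x i = 0 := by
    by_contra h
    refine hx ⟨update x i (x i - 1), ?_⟩
    simp [succAt, Nat.sub_add_cancel (Nat.one_le_iff_ne_zero.2 h)]
  rw [← hinj.hasSum_iff fun x hx => by simp [hrange x hx]]
  have hpmf := (hasSum_negMultinomialPMF hr hp hps).mul_left (p i)
  rw [mul_one] at hpmf
  refine hpmf.congr_fun fun y => ?_
  have hpos : 0 < r + ∑ j, (y j : ℝ) := by positivity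
  have hsum := sum_cast_update_succ y i
  simp only [comp_apply, succAt, update_self, Nat.cast_succ, hsum]
  rw [add_left_comm, add_sub_cancel_left, div_mul_eq_mul_div,
    negMultinomialPMF_update_succ r p y i hpos.ne', mul_assoc, mul_div_cancel_left₀ _ hpos.ne']

end

theorem negMultinomial_umvu_unbiased_general (m : ℕ) (r : ℝ) (hr : 1 ≤ r)
    (p : Fin m → ℝ) (hp : ∀ i, 0 < p i) (hps : ∑ i, p i < 1) (i : Fin m) :
    ∑' x : Fin m → ℕ,
      ((x i : ℝ) / (r + ∑ j, (x j : ℝ) - 1)) *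
        (Real.Gamma (r + ∑ j, (x j : ℝ)) / (Real.Gamma r * ∏ j, (Nat.factorial (x j) : ℝ)) *
          (1 - ∑ j, p j) ^ r * ∏ j, p j ^ x j)
      = p i :=
  (hasSum_div_mul_negMultinomialPMF (by linarith) (fun j => (hp j).le) hps i).tsum_eq

/-- For `X ~ NM(r, p)` with `r ≥ 1`, the UMVU estimator `X i / (r + X_· − 1)`
(with the convention `0 / 0 = 0`, which is Lean's division) is unbiased for `p i`. -/
theorem negMultinomial_umvu_unbiased (m : ℕ) (hm : 1 ≤ m) (r : ℝ) (hr : 1 ≤ r)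
    (p : Fin m → ℝ) (hp : ∀ i, 0 < p i) (hps : ∑ i, p i < 1) (i : Fin m) :
    ∑' x : Fin m → ℕ,
      ((x i : ℝ) / (r + ∑ j, (x j : ℝ) - 1)) *
        (Real.Gamma (r + ∑ j, (x j : ℝ)) / (Real.Gamma r * ∏ j, (Nat.factorial (x j) : ℝ)) *
          (1 - ∑ j, p j) ^ r * ∏ j, p j ^ x j)
      = p i :=
  negMultinomial_umvu_unbiased_general m r hr p hp hps i
end

section
/- Hudson-type identity for the negative multinomial distribution: let X ~ NM(r, p) on (ℕ₀)^m and let φ : (ℕ₀)^m → ℝ be nonnegative (or with E|φ(X)| < ∞). Fix a coordinate i, and suppose φ(x) = 0 whenever x_i = 0. Then E[ φ(X) / p_i ] = E[ (r + X_·)/(X_i + 1) · φ(X + e_i) ], where X_· = Σ_j X_j and e_i is the i-th standard unit vector. -/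
/-!
The shift `x ↦ x + eᵢ` maps `ℕ^m` bijectively onto `{x | xᵢ ≠ 0}`, which contains the support
of `φ`, so the left-hand series may be reindexed along it; this rewrites the family exactly and
is valid whether or not the series converge. Under the shift the negative multinomial weight
gains the factor `pᵢ (r + x_·) / (xᵢ + 1)`, by `Γ(s + 1) = s Γ(s)`, and `pᵢ` cancels `1 / pᵢ`.
-/

open Function Finset

section Shift

variable {ι : Type*} [DecidableEq ι]

theorem update_succ_injective (i : ι) : Injective fun x : ι → ℕ => update x i (x i + 1) := by
  intro x y hxy
  funext j
  have hj := congrFun hxy j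
  rcases eq_or_ne j i with rfl | hji
  · simpa using hj
  · simpa [update_of_ne hji] using hj

theorem tsum_comp_update_succ {α : Type*} [AddCommMonoid α] [TopologicalSpace α]
    (F : (ι → ℕ) → α) (i : ι) (hF : ∀ x, x i = 0 → F x = 0) :
    ∑' x, F (update x i (x i + 1)) = ∑' x, F x := by
  refine (update_succ_injective i).tsum_eq fun y hy => ⟨update y i (y i - 1), ?_⟩
  have hyi : y i ≠ 0 := fun h => hy (hF y h)
  funext j
  rcases eq_or_ne j i with rfl | hji
  · simp only [update_self]
    omega
  · simp [update_of_ne hji]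

@[to_additive]
theorem prod_update_succ [Fintype ι] {M : Type*} [CommMonoid M] (g : ι → ℕ → M)
    (x : ι → ℕ) (i : ι) :
    ∏ j, g j (update x i (x i + 1) j) = g i (x i + 1) * ∏ j ∈ {i}ᶜ, g j (x j) := by
  rw [Fintype.prod_eq_mul_prod_compl i, update_self]
  congr 1
  exact prod_congr rfl fun j hj => by rw [update_of_ne (by simpa using hj)]

end Shift

noncomputable def negMultinomialWeight {ι : Type*} [Fintype ι] (r : ℝ) (p : ι → ℝ)
    (x : ι → ℕ) : ℝ :=
  Real.Gamma (r + ∑ j, (x j : ℝ)) / (Real.Gamma r * ∏ j, (Nat.factorial (x j) : ℝ)) *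
    (1 - ∑ j, p j) ^ r * ∏ j, p j ^ x j

theorem negMultinomialWeight_update_succ {ι : Type*} [Fintype ι] [DecidableEq ι] (r : ℝ)
    (p : ι → ℝ) (x : ι → ℕ) (i : ι) :
    negMultinomialWeight r p (update x i (x i + 1)) =
      (r + ∑ j, (x j : ℝ)) / ((x i : ℝ) + 1) * p i * negMultinomialWeight r p x := by
  have hsum : ∑ j, ((update x i (x i + 1) j : ℕ) : ℝ) = ∑ j, (x j : ℝ) + 1 := by
    rw [sum_update_succ (fun _ n => (n : ℝ)), Fintype.sum_eq_add_sum_compl i]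
    push_cast
    ring
  have hfac : ∏ j, (Nat.factorial (update x i (x i + 1) j) : ℝ) =
      ((x i : ℝ) + 1) * ∏ j, (Nat.factorial (x j) : ℝ) := by
    rw [prod_update_succ (fun _ n => (Nat.factorial n : ℝ)), Fintype.prod_eq_mul_prod_compl i,
      Nat.factorial_succ]
    push_cast
    ring
  have hpow : ∏ j, p j ^ update x i (x i + 1) j = p i * ∏ j, p j ^ x j := by
    rw [prod_update_succ (fun j n => p j ^ n), Fintype.prod_eq_mul_prod_compl i, pow_succ]
    ring
  unfold negMultinomialWeight
  rw [hsum, hfac, hpow, ← add_assoc]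
  by_cases hs : r + ∑ j, (x j : ℝ) = 0
  · -- `r = -x_·` is a nonpositive integer, so `Γ(r) = 0` and both weights vanish.
    have hΓ : Real.Gamma r = 0 := by
      rw [Real.Gamma_eq_zero_iff]
      exact ⟨∑ j, x j, by push_cast; linarith⟩
    simp [hs, hΓ]
  · rw [Real.Gamma_add_one hs]
    field_simp

theorem negMultinomial_hudson_identity_general (m : ℕ) (r : ℝ)
    (p : Fin m → ℝ) (hp : ∀ i, 0 < p i)
    (φ : (Fin m → ℕ) → ℝ) (i : Fin m)
    (hvan : ∀ x : Fin m → ℕ, x i = 0 → φ x = 0) :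
    ∑' x : Fin m → ℕ,
      (φ x / p i) *
        (Real.Gamma (r + ∑ j, (x j : ℝ)) / (Real.Gamma r * ∏ j, (Nat.factorial (x j) : ℝ)) *
          (1 - ∑ j, p j) ^ r * ∏ j, p j ^ x j)
      = ∑' x : Fin m → ℕ,
          ((r + ∑ j, (x j : ℝ)) / ((x i : ℝ) + 1)) * φ (Function.update x i (x i + 1)) *
            (Real.Gamma (r + ∑ j, (x j : ℝ)) / (Real.Gamma r * ∏ j, (Nat.factorial (x j) : ℝ)) *
              (1 - ∑ j, p j) ^ r * ∏ j, p j ^ x j) := by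
  change ∑' x, φ x / p i * negMultinomialWeight r p x =
    ∑' x, (r + ∑ j, (x j : ℝ)) / ((x i : ℝ) + 1) * φ (update x i (x i + 1)) *
      negMultinomialWeight r p x
  rw [← tsum_comp_update_succ _ i fun x hx => by rw [hvan x hx, zero_div, zero_mul]]
  refine tsum_congr fun x => ?_
  rw [negMultinomialWeight_update_succ]
  field_simp [(hp i).ne']

/-- Hudson-type identity for the negative multinomial distribution: for nonnegative `φ`
vanishing on `{x : x i = 0}`,
`E[φ(X)/p i] = E[((r + X_·)/(X i + 1)) · φ(X + e i)]`. -/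
theorem negMultinomial_hudson_identity (m : ℕ) (hm : 1 ≤ m) (r : ℝ) (hr : 0 < r)
    (p : Fin m → ℝ) (hp : ∀ i, 0 < p i) (hps : ∑ i, p i < 1)
    (φ : (Fin m → ℕ) → ℝ) (hφ : ∀ x, 0 ≤ φ x) (i : Fin m)
    (hvan : ∀ x : Fin m → ℕ, x i = 0 → φ x = 0) :
    ∑' x : Fin m → ℕ,
      (φ x / p i) *
        (Real.Gamma (r + ∑ j, (x j : ℝ)) / (Real.Gamma r * ∏ j, (Nat.factorial (x j) : ℝ)) *
          (1 - ∑ j, p j) ^ r * ∏ j, p j ^ x j)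
      = ∑' x : Fin m → ℕ,
          ((r + ∑ j, (x j : ℝ)) / ((x i : ℝ) + 1)) * φ (Function.update x i (x i + 1)) *
            (Real.Gamma (r + ∑ j, (x j : ℝ)) / (Real.Gamma r * ∏ j, (Nat.factorial (x j) : ℝ)) *
              (1 - ∑ j, p j) ^ r * ∏ j, p j ^ x j) :=
  negMultinomial_hudson_identity_general m r p hp φ i hvan
end

section
/- Harmonic-sum/falling-factorial identity: for every real t > 0 and every natural number z ≥ 1, Σ_{k=1}^{z} 1/(t + k − 1) = Σ_{k=1}^{z} (1/k) · [ z(z−1)⋯(z−k+1) ] / [ (t+z−1)(t+z−2)⋯(t+z−k) ], i.e. Σ_{k=1}^{z} 1/(t+k−1) = Σ_{k=1}^{z} (1/k) ∏_{j=0}^{k−1} (z − j)/(t + z − 1 − j). -/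
/-!
Induct on `z`, moving from `t` to `t + 1`. On the left, `∑_{k<z+1} 1/(t+k) = 1/t + ∑_{k<z} 1/(t+1+k)`.
On the right, write `x_(k)` for the falling factorial `x (x-1) ⋯ (x-k+1)`; the two sides of the
inductive step share the denominators `(t+z)_(k+1)`, and `(z+1)_(k+1) - z_(k+1) = (k+1) z_(k)` makes
their difference `∑_{k≤z} z_(k) / (t+z)_(k+1)`. This sum telescopes to `1/t`, because
`t · z_(k) / (t+z)_(k+1) = z_(k) / (t+z)_(k) - z_(k+1) / (t+z)_(k+1)` and `z_(z+1) = 0`.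
-/

open Finset

theorem prod_range_succ_add_one_sub_prod_range_succ {R : Type*} [CommRing R] (x : R) (k : ℕ) :
    ∏ j ∈ range (k + 1), (x + 1 - j) - ∏ j ∈ range (k + 1), (x - j)
      = (k + 1) * ∏ j ∈ range k, (x - j) := by
  rw [prod_range_succ' (fun j : ℕ => x + 1 - j), prod_range_succ (fun j : ℕ => x - j)]
  have hshift : ∀ j ∈ range k, x + 1 - ((j + 1 : ℕ) : R) = x - j := fun j _ => by
    push_cast; ring
  rw [prod_congr rfl hshift]
  push_cast
  ring

section Field

variable {K : Type*} [Field K]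

theorem mul_sum_range_prod_div_prod_range_succ (x y : K) (m : ℕ) (hy : ∀ k < m, y - k ≠ 0) :
    (y - x) * ∑ k ∈ range m, (∏ j ∈ range k, (x - j)) / ∏ j ∈ range (k + 1), (y - j)
      = 1 - ∏ j ∈ range m, (x - j) / (y - j) := by
  set r : ℕ → K := fun k => ∏ j ∈ range k, (x - j) / (y - j)
  have hterm : ∀ k ∈ range m,
      (y - x) * ((∏ j ∈ range k, (x - j)) / ∏ j ∈ range (k + 1), (y - j)) = r k - r (k + 1) := by
    intro k hk
    have hyk := hy k (mem_range.mp hk)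
    simp only [r, prod_range_succ, ← div_div, ← prod_div_distrib]
    field_simp
    ring
  rw [mul_sum, sum_congr rfl hterm, sum_range_sub']
  simp [r]

theorem sum_range_prod_natCast_sub_div_prod_range_succ (t : K) (ht : ∀ n : ℕ, t + n ≠ 0) (n : ℕ) :
    ∑ k ∈ range (n + 1), (∏ j ∈ range k, ((n : K) - j)) / ∏ j ∈ range (k + 1), (t + n - j)
      = 1 / t := by
  have hy : ∀ k < n + 1, t + n - k ≠ 0 := fun k hk => by
    simpa [Nat.cast_sub (Nat.lt_succ_iff.mp hk), add_sub_assoc] using ht (n - k)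
  have htele := mul_sum_range_prod_div_prod_range_succ (n : K) (t + n) (n + 1) hy
  rw [prod_eq_zero (self_mem_range_succ n) (by simp), add_sub_cancel_right, sub_zero] at htele
  rw [eq_div_iff (by simpa using ht 0), mul_comm, htele]

theorem sum_range_div_succ_mul_prod_add_one_sub [CharZero K] (x y : K) (m : ℕ) :
    ∑ k ∈ range m, 1 / ((k : K) + 1) * ∏ j ∈ range (k + 1), (x + 1 - j) / (y - j)
      - ∑ k ∈ range m, 1 / ((k : K) + 1) * ∏ j ∈ range (k + 1), (x - j) / (y - j)
      = ∑ k ∈ range m, (∏ j ∈ range k, (x - j)) / ∏ j ∈ range (k + 1), (y - j) := by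
  rw [← sum_sub_distrib]
  refine sum_congr rfl fun k _ => ?_
  rw [← mul_sub, prod_div_distrib, prod_div_distrib, ← sub_div,
    prod_range_succ_add_one_sub_prod_range_succ]
  field_simp [Nat.cast_add_one_ne_zero k]

theorem sum_range_one_div_add_eq_sum_prod_div [CharZero K] (t : K) (ht : ∀ n : ℕ, t + n ≠ 0)
    (z : ℕ) :
    ∑ k ∈ range z, 1 / (t + k)
      = ∑ k ∈ range z, 1 / ((k : K) + 1) * ∏ j ∈ range (k + 1), ((z : K) - j) / (t + z - 1 - j) := by
  induction z generalizing t with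
  | zero => simp
  | succ z ih =>
    have ht1 : ∀ n : ℕ, t + 1 + n ≠ 0 := fun n => by
      simpa only [Nat.cast_succ, add_comm, add_left_comm] using ht (n + 1)
    have hleft : ∑ k ∈ range (z + 1), 1 / (t + k) = ∑ k ∈ range z, 1 / (t + 1 + k) + 1 / t := by
      simp only [sum_range_succ', Nat.cast_succ, Nat.cast_zero, add_zero, ← add_assoc,
        add_right_comm]
    have hright : ∑ k ∈ range z, 1 / ((k : K) + 1) *
          ∏ j ∈ range (k + 1), ((z : K) - j) / (t + 1 + z - 1 - j)
        = ∑ k ∈ range (z + 1), 1 / ((k : K) + 1) *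
          ∏ j ∈ range (k + 1), ((z : K) - j) / (t + z - j) := by
      rw [sum_range_succ, prod_eq_zero (self_mem_range_succ z) (by simp), mul_zero, add_zero,
        show t + 1 + (z : K) - 1 = t + z by ring]
    rw [hleft, ih (t + 1) ht1, hright, Nat.cast_succ, show t + ((z : K) + 1) - 1 = t + z by ring]
    linear_combination -sum_range_div_succ_mul_prod_add_one_sub (z : K) (t + z) (z + 1)
      - sum_range_prod_natCast_sub_div_prod_range_succ t ht z

end Field

theorem harmonic_falling_factorial_identity_general (t : ℝ) (ht : 0 < t) (z : ℕ) :
    ∑ k ∈ Finset.range z, (1 : ℝ) / (t + k)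
      = ∑ k ∈ Finset.range z, (1 / ((k : ℝ) + 1)) *
          ∏ j ∈ Finset.range (k + 1), ((z : ℝ) - j) / (t + z - 1 - j) :=
  sum_range_one_div_add_eq_sum_prod_div t (fun n => by positivity) z

/-- Harmonic-sum/falling-factorial identity:
`∑_{k=1}^z 1/(t+k−1) = ∑_{k=1}^z (1/k) ∏_{j=0}^{k−1} (z−j)/(t+z−1−j)` for `t > 0`, `z ≥ 1`. -/
theorem harmonic_falling_factorial_identity (t : ℝ) (ht : 0 < t) (z : ℕ) (hz : 1 ≤ z) :
    ∑ k ∈ Finset.range z, (1 : ℝ) / (t + k)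
      = ∑ k ∈ Finset.range z, (1 / ((k : ℝ) + 1)) *
          ∏ j ∈ Finset.range (k + 1), ((z : ℝ) - j) / (t + z - 1 - j) :=
  harmonic_falling_factorial_identity_general t ht z
end

section
/- Key algebraic inequality for predictive density dominance: let r ≥ 1, a > 0, a_0 ∈ ℝ, c ≥ 0 be reals, let x ≥ 1 be an integer, and let k, s be integers with 0 ≤ s and k ≥ s + 1. If (c − a)(r − 1) ≤ x·(−c − k − a_0), then c/(k − s + x + a − 1) ≤ 1 − (x/(r + x − 1)) · (k + r + a_0 + x + a − 1)/(k − s + x + a − 1). (Here c plays the role of (α+1)γ/(β+γ) in the paper.) -/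
/-!
Clearing the positive denominators `R = r + x - 1` and `D = k - s + x + a - 1`, the claim becomes
`c R + x (k + r + a0 + x + a - 1) ≤ R D`. The hypothesis rearranges to `c R + x (k + a0) ≤ a (r - 1)`,
and `R D = x (r + x + a - 1) + a (r - 1) + R (k - s - 1)`, whose last term is nonnegative.
-/

theorem div_le_one_sub_div_mul_div_iff {K : Type*} [Field K] [LinearOrder K]
    [IsStrictOrderedRing K] {c x N R D : K} (hR : 0 < R) (hD : 0 < D) :
    c / D ≤ 1 - x / R * (N / D) ↔ c * R + x * N ≤ R * D := by
  rw [div_mul_div_comm, ← sub_nonneg, ← sub_nonneg (b := c * R + x * N),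
    show 1 - x * N / (R * D) - c / D = (R * D - (c * R + x * N)) / (R * D) by field_simp; ring,
    le_div_iff₀ (mul_pos hR hD), zero_mul]

theorem predictive_dominance_bound {r a a0 c x k s : ℝ} (hr : 1 ≤ r) (ha : 0 < a) (hx : 1 ≤ x)
    (hk : s + 1 ≤ k) (h : (c - a) * (r - 1) ≤ x * (-c - k - a0)) :
    c / (k - s + x + a - 1)
      ≤ 1 - (x / (r + x - 1)) * ((k + r + a0 + x + a - 1) / (k - s + x + a - 1)) := by
  have hR : 0 < r + x - 1 := by linarith
  rw [div_le_one_sub_div_mul_div_iff hR (by linarith)]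
  have hslack : 0 ≤ (r + x - 1) * (k - s - 1) := mul_nonneg hR.le (by linarith)
  linear_combination h + hslack

theorem predictive_dominance_key_inequality_general (r a a0 c : ℝ)
    (hr : 1 ≤ r) (ha : 0 < a)
    (x : ℤ) (hx : 1 ≤ x) (k s : ℤ) (hk : s + 1 ≤ k)
    (h : (c - a) * (r - 1) ≤ (x : ℝ) * (-c - (k : ℝ) - a0)) :
    c / ((k : ℝ) - (s : ℝ) + (x : ℝ) + a - 1)
      ≤ 1 - ((x : ℝ) / (r + (x : ℝ) - 1)) *
          (((k : ℝ) + r + a0 + (x : ℝ) + a - 1) / ((k : ℝ) - (s : ℝ) + (x : ℝ) + a - 1)) :=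
  predictive_dominance_bound hr ha (by exact_mod_cast hx) (by exact_mod_cast hk) h

/-- Key algebraic inequality for predictive density dominance. -/
theorem predictive_dominance_key_inequality (r a a0 c : ℝ)
    (hr : 1 ≤ r) (ha : 0 < a) (hc : 0 ≤ c)
    (x : ℤ) (hx : 1 ≤ x) (k s : ℤ) (hs : 0 ≤ s) (hk : s + 1 ≤ k)
    (h : (c - a) * (r - 1) ≤ (x : ℝ) * (-c - (k : ℝ) - a0)) :
    c / ((k : ℝ) - (s : ℝ) + (x : ℝ) + a - 1)
      ≤ 1 - ((x : ℝ) / (r + (x : ℝ) - 1)) *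
          (((k : ℝ) + r + a0 + (x : ℝ) + a - 1) / ((k : ℝ) - (s : ℝ) + (x : ℝ) + a - 1)) :=
  predictive_dominance_key_inequality_general r a a0 c hr ha x hx k s hk h
end
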